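/- Let I and A be finite nonempty types, let P : I → ℝ be a probability mass function on I, and for each μ ∈ I let p_μ : A → ℝ be an everywhere-positive probability mass function on A. Let Q̄ : A → ℝ and γ ≥ 0. Define Y(μ) = γ·Σ_{a∈A} p_μ(a)·Q̄(a) and D_{η,μ} = D_KL(p_η‖p_μ). Then Σ_{μ} P(μ)·(Y(μ) − Σ_{η} P(η)·Y(η))² ≤ Σ_{μ} P(μ)·γ²·( (max_{a∈A} |Q̄(a)|)·Σ_{η} P(η)·√(2·D_{η,μ}) )². -/

import Mathlib

/-- Kullback–Leibler divergence (natural log) between two PMFs on a finite type. -/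
noncomputable def KLdiv {A : Type*} [Fintype A] (q p : A → ℝ) : ℝ :=
  ∑ a, q a * Real.log (q a / p a)

/-!
Pinsker's inequality `‖q - p‖₁ ≤ √(2 KL(q‖p))` follows from the pointwise bound
`3 (t - 1)² ≤ 2 (t + 2) klFun t`: with `t = q a / p a` it reads
`(q a - p a)² / (q a + 2 p a) ≤ (2/3) p a klFun (q a / p a)`, and the weights `q a + 2 p a`
sum to `3`, so Cauchy–Schwarz (Sedrakyan's form) gives `‖q - p‖₁² ≤ 2 KL(q‖p)`.
Then `Y μ - E_P[Y] = γ E_η[⟨p_μ - p_η, Q̄⟩]`, and each inner product is at most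
`max |Q̄| ‖p_η - p_μ‖₁ ≤ max |Q̄| √(2 D η μ)`.
-/

open Real Finset InformationTheory

open Set in
lemma monotoneOn_add_one_mul_log_sub :
    MonotoneOn (fun t : ℝ => (t + 1) * log t - 2 * (t - 1)) (Ioi 0) := by
  have hderiv : ∀ t ∈ Ioi (0 : ℝ),
      HasDerivAt (fun t : ℝ => (t + 1) * log t - 2 * (t - 1)) (log t + t⁻¹ - 1) t := by
    intro t (ht : 0 < t)
    refine ((((hasDerivAt_id' t).add_const 1).mul (hasDerivAt_log (ne_of_gt ht))).sub
      (((hasDerivAt_id' t).sub_const 1).const_mul 2)).congr_deriv ?_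
    field_simp
    ring
  refine monotoneOn_of_hasDerivWithinAt_nonneg (convex_Ioi 0)
    (fun t ht => (hderiv t ht).continuousAt.continuousWithinAt) (fun t ht => ?_)
    (f' := fun t => log t + t⁻¹ - 1) (fun t ht => ?_)
  all_goals rw [interior_Ioi] at ht
  · exact (hderiv t ht).hasDerivWithinAt
  · linarith [one_sub_inv_le_log_of_pos (mem_Ioi.1 ht)]

lemma hasDerivAt_add_two_mul_klFun_sub {t : ℝ} (ht : t ≠ 0) :
    HasDerivAt (fun t => (t + 2) * klFun t - 3 / 2 * (t - 1) ^ 2)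
      (2 * ((t + 1) * log t - 2 * (t - 1))) t := by
  refine ((((hasDerivAt_id' t).add_const 2).mul (hasDerivAt_klFun ht)).sub
    ((((hasDerivAt_id' t).sub_const 1).pow 2).const_mul (3 / 2))).congr_deriv ?_
  simp only [klFun_apply]
  push_cast
  ring

open Set in
lemma three_halves_mul_sq_sub_one_le_add_two_mul_klFun {t : ℝ} (ht : 0 < t) :
    3 / 2 * (t - 1) ^ 2 ≤ (t + 2) * klFun t := by
  set g : ℝ → ℝ := fun t => (t + 2) * klFun t - 3 / 2 * (t - 1) ^ 2
  have hg : ∀ x ∈ Ioi (0 : ℝ), HasDerivAt g (2 * ((x + 1) * log x - 2 * (x - 1))) x :=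
    fun x hx => hasDerivAt_add_two_mul_klFun_sub (ne_of_gt hx)
  have hdiff : ∀ s ⊆ Ioi (0 : ℝ), DifferentiableOn ℝ g s :=
    fun s hs x hx => (hg x (hs hx)).differentiableAt.differentiableWithinAt
  have hmono := monotoneOn_add_one_mul_log_sub
  have hmin : IsMinOn g (Ioi 0) 1 := by
    refine isMinOn_Ioi_of_deriv (hg 1 (mem_Ioi.2 one_pos)).continuousAt
      (hdiff _ Ioo_subset_Ioi_self) (hdiff _ (Ioi_subset_Ioi zero_le_one))
      (fun x hx => ?_) (fun x hx => ?_)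
    · rw [(hg x hx.1).deriv]
      have := hmono hx.1 (mem_Ioi.2 one_pos) hx.2.le
      simp only [one_add_one_eq_two, sub_self, mul_zero, log_one] at this
      linarith
    · have hx0 : (0 : ℝ) < x := one_pos.trans hx
      rw [(hg x hx0).deriv]
      have := hmono (mem_Ioi.2 one_pos) hx0 (le_of_lt hx)
      simp only [one_add_one_eq_two, sub_self, mul_zero, log_one] at this
      linarith
  have := hmin (mem_Ioi.2 ht)
  simp only [mem_ofPred_eq, g, klFun_one, sub_self] at this
  linarith

lemma sq_sub_div_add_two_mul_le_mul_klFun {p q : ℝ} (hp : 0 < p) (hq : 0 < q) :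
    (q - p) ^ 2 / (q + 2 * p) ≤ 2 / 3 * (p * klFun (q / p)) := by
  obtain ⟨t, ht, rfl⟩ : ∃ t, 0 < t ∧ q = p * t := ⟨q / p, div_pos hq hp, by field_simp⟩
  rw [mul_div_cancel_left₀ t hp.ne', div_le_iff₀ (by positivity)]
  have key := three_halves_mul_sq_sub_one_le_add_two_mul_klFun ht
  calc (p * t - p) ^ 2 = 2 / 3 * p ^ 2 * (3 / 2 * (t - 1) ^ 2) := by ring
    _ ≤ 2 / 3 * p ^ 2 * ((t + 2) * klFun t) := by gcongr
    _ = 2 / 3 * (p * klFun t) * (p * t + 2 * p) := by ring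

lemma KLdiv_eq_sum_mul_klFun {A : Type*} [Fintype A] {q p : A → ℝ} (hp : ∀ a, p a ≠ 0)
    (hsum : ∑ a, q a = ∑ a, p a) : KLdiv q p = ∑ a, p a * klFun (q a / p a) := by
  have hterm : ∀ a, p a * klFun (q a / p a) = q a * log (q a / p a) + p a - q a := fun a => by
    rw [klFun_apply]
    field_simp [hp a]
  simp only [hterm, sum_sub_distrib, sum_add_distrib, hsum, KLdiv]
  ring

theorem sq_sum_abs_sub_le_two_mul_KLdiv {A : Type*} [Fintype A] {q p : A → ℝ}
    (hq : ∀ a, 0 < q a) (hp : ∀ a, 0 < p a) (hqs : ∑ a, q a = 1) (hps : ∑ a, p a = 1) :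
    (∑ a, |q a - p a|) ^ 2 ≤ 2 * KLdiv q p := by
  have hweights : ∑ a, (q a + 2 * p a) = 3 := by
    rw [sum_add_distrib, ← mul_sum, hqs, hps]
    norm_num
  have hCS := sq_sum_div_le_sum_sq_div univ (fun a => |q a - p a|)
    (fun a _ => by linarith [hq a, hp a] : ∀ a ∈ univ, 0 < q a + 2 * p a)
  rw [hweights] at hCS
  calc (∑ a, |q a - p a|) ^ 2 = 3 * ((∑ a, |q a - p a|) ^ 2 / 3) := by ring
    _ ≤ 3 * ∑ a, |q a - p a| ^ 2 / (q a + 2 * p a) := by gcongr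
    _ ≤ 3 * ∑ a, 2 / 3 * (p a * klFun (q a / p a)) := by
      gcongr with a
      rw [sq_abs]
      exact sq_sub_div_add_two_mul_le_mul_klFun (hp a) (hq a)
    _ = 2 * KLdiv q p := by
      rw [← mul_sum, KLdiv_eq_sum_mul_klFun (fun a => (hp a).ne') (hqs.trans hps.symm)]
      ring

theorem sum_abs_sub_le_sqrt_two_mul_KLdiv {A : Type*} [Fintype A] {q p : A → ℝ}
    (hq : ∀ a, 0 < q a) (hp : ∀ a, 0 < p a) (hqs : ∑ a, q a = 1) (hps : ∑ a, p a = 1) :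
    ∑ a, |q a - p a| ≤ √(2 * KLdiv q p) :=
  le_sqrt_of_sq_le (sq_sum_abs_sub_le_two_mul_KLdiv hq hp hqs hps)

lemma abs_sum_mul_sub_sum_mul_le {A : Type*} [Fintype A] [Nonempty A] (q p f : A → ℝ) :
    |∑ a, q a * f a - ∑ a, p a * f a|
      ≤ (univ.sup' univ_nonempty fun a => |f a|) * ∑ a, |q a - p a| := by
  rw [← sum_sub_distrib, mul_sum]
  refine (abs_sum_le_sum_abs _ _).trans (sum_le_sum fun a _ => ?_)
  rw [← sub_mul, abs_mul, mul_comm]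
  exact mul_le_mul_of_nonneg_right (le_sup' (fun a => |f a|) (mem_univ a)) (abs_nonneg _)

lemma abs_sum_mul_sub_sum_mul_le_sqrt_two_mul_KLdiv {A : Type*} [Fintype A] [Nonempty A]
    {q p : A → ℝ} (hq : ∀ a, 0 < q a) (hp : ∀ a, 0 < p a) (hqs : ∑ a, q a = 1)
    (hps : ∑ a, p a = 1) (f : A → ℝ) :
    |∑ a, q a * f a - ∑ a, p a * f a|
      ≤ (univ.sup' univ_nonempty fun a => |f a|) * √(2 * KLdiv q p) := by
  have hM : 0 ≤ univ.sup' univ_nonempty fun a => |f a| :=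
    (abs_nonneg _).trans (le_sup' (fun a => |f a|) (mem_univ (Classical.arbitrary A)))
  exact (abs_sum_mul_sub_sum_mul_le q p f).trans <|
    mul_le_mul_of_nonneg_left (sum_abs_sub_le_sqrt_two_mul_KLdiv hq hp hqs hps) hM

lemma abs_sub_sum_mul_le_sum_mul_abs_sub {I : Type*} [Fintype I] {P : I → ℝ}
    (hP : ∀ i, 0 ≤ P i) (hPsum : ∑ i, P i = 1) (x : I → ℝ) (i : I) :
    |x i - ∑ j, P j * x j| ≤ ∑ j, P j * |x i - x j| := by
  have hcenter : x i - ∑ j, P j * x j = ∑ j, P j * (x i - x j) := by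
    simp only [mul_sub, sum_sub_distrib, ← sum_mul, hPsum, one_mul]
  rw [hcenter]
  refine (abs_sum_le_sum_abs _ _).trans_eq (sum_congr rfl fun j _ => ?_)
  rw [abs_mul, abs_of_nonneg (hP j)]

theorem stmt_9_general {I A : Type*} [Fintype I] [Fintype A] [Nonempty A]
    (P : I → ℝ) (hP : ∀ μ, 0 ≤ P μ) (hPsum : ∑ μ, P μ = 1)
    (p : I → A → ℝ) (hp : ∀ μ a, 0 < p μ a) (hpsum : ∀ μ, ∑ a, p μ a = 1)
    (Qbar : A → ℝ) (γ : ℝ)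
    (Y : I → ℝ) (D : I → I → ℝ)
    (hY : ∀ μ, Y μ = γ * ∑ a, p μ a * Qbar a)
    (hD : ∀ η μ, D η μ = KLdiv (p η) (p μ)) :
    ∑ μ, P μ * (Y μ - ∑ η, P η * Y η) ^ 2
      ≤ ∑ μ, P μ * γ ^ 2 *
          ((Finset.univ.sup' Finset.univ_nonempty fun a => |Qbar a|)
            * ∑ η, P η * Real.sqrt (2 * D η μ)) ^ 2 := by
  set M := univ.sup' univ_nonempty fun a => |Qbar a|
  set E : I → ℝ := fun μ => ∑ a, p μ a * Qbar a
  refine sum_le_sum fun μ _ => ?_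
  have hdev : |E μ - ∑ η, P η * E η| ≤ M * ∑ η, P η * √(2 * D η μ) := calc
    _ ≤ ∑ η, P η * |E μ - E η| := abs_sub_sum_mul_le_sum_mul_abs_sub hP hPsum E μ
    _ ≤ ∑ η, P η * (M * √(2 * D η μ)) := by
      refine sum_le_sum fun η _ => mul_le_mul_of_nonneg_left ?_ (hP η)
      rw [abs_sub_comm, hD]
      exact abs_sum_mul_sub_sum_mul_le_sqrt_two_mul_KLdiv (hp η) (hp μ) (hpsum η) (hpsum μ) Qbar
    _ = M * ∑ η, P η * √(2 * D η μ) := by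
      rw [mul_sum]
      exact sum_congr rfl fun η _ => mul_left_comm _ _ _
  have hY_sub : Y μ - ∑ η, P η * Y η = γ * (E μ - ∑ η, P η * E η) := by
    simp only [hY, E, mul_sub, mul_sum, mul_left_comm γ]
  calc P μ * (Y μ - ∑ η, P η * Y η) ^ 2
        = P μ * γ ^ 2 * |E μ - ∑ η, P η * E η| ^ 2 := by
        rw [hY_sub, sq_abs]
        ring
    _ ≤ P μ * γ ^ 2 * (M * ∑ η, P η * √(2 * D η μ)) ^ 2 := by
        have := hP μ
        gcongr

/-- DDPG case, Appendix F: with `Y μ = γ·∑_a p_μ a · Q̄ a` and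
`D_{η,μ} = D_KL(p_η‖p_μ)`, the variance of `Y` under `P` is bounded by
`∑_μ P μ · γ² · ((max_a |Q̄ a|)·∑_η P η·√(2·D_{η,μ}))²`. -/
theorem stmt_9 {I A : Type*} [Fintype I] [Nonempty I] [Fintype A] [Nonempty A]
    (P : I → ℝ) (hP : ∀ μ, 0 ≤ P μ) (hPsum : ∑ μ, P μ = 1)
    (p : I → A → ℝ) (hp : ∀ μ a, 0 < p μ a) (hpsum : ∀ μ, ∑ a, p μ a = 1)
    (Qbar : A → ℝ) (γ : ℝ) (hγ : 0 ≤ γ)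
    (Y : I → ℝ) (D : I → I → ℝ)
    (hY : ∀ μ, Y μ = γ * ∑ a, p μ a * Qbar a)
    (hD : ∀ η μ, D η μ = KLdiv (p η) (p μ)) :
    ∑ μ, P μ * (Y μ - ∑ η, P η * Y η) ^ 2
      ≤ ∑ μ, P μ * γ ^ 2 *
          ((Finset.univ.sup' Finset.univ_nonempty fun a => |Qbar a|)
            * ∑ η, P η * Real.sqrt (2 * D η μ)) ^ 2 :=
  stmt_9_general P hP hPsum p hp hpsum Qbar γ Y D hY hD
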